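/- arXiv:2509.12862 — 5 statements merged into one kernel-verified Lean document; each statement's English description precedes it below -/
import Mathlib

section
/- Let q and L be positive integers with 2^L ≥ q. If x_1,...,x_L are chosen independently and uniformly at random from ℤ/qℤ, then with probability at least 1 − q²·2^{−L}, every element of ℤ/qℤ can be written as ε_1·x_1 + ... + ε_L·x_L for some ε ∈ {0,1}^L. -/
open Finset

/-- Number of subsets summing to `t`. -/
def Ncount (q L : ℕ) (x : Fin L → ZMod q) (t : ZMod q) : ℕ :=
  (Finset.univ.filter fun ε : Fin L → Bool => (∑ i, if ε i then x i else 0) = t).card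

/-- Sum of squares of fiber counts. -/
def Wsum (q L : ℕ) [NeZero q] (x : Fin L → ZMod q) : ℕ :=
  ∑ t : ZMod q, (Ncount q L x t) ^ 2

lemma fiber_card (q L : ℕ) [NeZero q] (c : Fin L → ZMod q) (i₀ : Fin L)
    (hc : c i₀ * c i₀ = 1) (t : ZMod q) :
    q * (Finset.univ.filter fun x : Fin L → ZMod q => ∑ i, c i * x i = t).card
      = q ^ L := by
  classical
  have hsingle : ∀ a : ZMod q, ∑ i, c i * ((Pi.single i₀ a : Fin L → ZMod q)) i = c i₀ * a := by
    intro a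
    rw [Finset.sum_eq_single i₀]
    · simp
    · intro b _ hb; simp [Pi.single_eq_of_ne hb]
    · simp
  have hequi : ∀ s : ZMod q,
      (Finset.univ.filter fun x : Fin L → ZMod q => ∑ i, c i * x i = s).card
        = (Finset.univ.filter fun x : Fin L → ZMod q => ∑ i, c i * x i = t).card := by
    intro s
    apply Finset.card_bij' (fun x _ => x + (Pi.single i₀ (c i₀ * (t - s)) : Fin L → ZMod q))
      (fun y _ => y + (Pi.single i₀ (c i₀ * (s - t)) : Fin L → ZMod q))
    · intro x hx
      simp only [Finset.mem_filter, Finset.mem_univ, true_and] at hx ⊢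
      simp only [Pi.add_apply, mul_add, Finset.sum_add_distrib, hx, hsingle]
      rw [← mul_assoc, hc]; ring
    · intro y hy
      simp only [Finset.mem_filter, Finset.mem_univ, true_and] at hy ⊢
      simp only [Pi.add_apply, mul_add, Finset.sum_add_distrib, hy, hsingle]
      rw [← mul_assoc, hc]; ring
    · intro x _
      funext i
      by_cases h : i = i₀ <;> simp [h, Pi.single_eq_of_ne]
      ring
    · intro y _
      funext i
      by_cases h : i = i₀ <;> simp [h, Pi.single_eq_of_ne]
      ring
  have hcard : (Finset.univ : Finset (Fin L → ZMod q)).card = q ^ L := by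
    simp [ZMod.card]
  have hfib : (Finset.univ : Finset (Fin L → ZMod q)).card
      = ∑ s : ZMod q, (Finset.univ.filter fun x : Fin L → ZMod q => ∑ i, c i * x i = s).card :=
    Finset.card_eq_sum_card_fiberwise (fun x _ => Finset.mem_univ _)
  rw [Finset.sum_congr rfl (fun s _ => hequi s), Finset.sum_const, smul_eq_mul] at hfib
  have hz : (Finset.univ : Finset (ZMod q)).card = q := by
    rw [Finset.card_univ, ZMod.card q]
  rw [hz, hcard] at hfib
  exact hfib.symm

lemma pair_card (q L : ℕ) [NeZero q] (ε ε' : Fin L → Bool) (hne : ε ≠ ε') :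
    q * (Finset.univ.filter fun x : Fin L → ZMod q =>
        (∑ i, if ε i then x i else 0) = (∑ i, if ε' i then x i else 0)).card = q ^ L := by
  classical
  obtain ⟨i₀, hi₀⟩ : ∃ i, ε i ≠ ε' i := by
    by_contra h; push_neg at h; exact hne (funext h)
  set c : Fin L → ZMod q := fun i => (if ε i then 1 else 0) - (if ε' i then 1 else 0) with hcdef
  have hc : c i₀ * c i₀ = 1 := by
    simp only [hcdef]
    cases hε : ε i₀ <;> cases hε' : ε' i₀ <;> simp_all
  have hfilter : (Finset.univ.filter fun x : Fin L → ZMod q =>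
      (∑ i, if ε i then x i else 0) = (∑ i, if ε' i then x i else 0))
      = Finset.univ.filter fun x : Fin L → ZMod q => ∑ i, c i * x i = 0 := by
    apply Finset.filter_congr
    intro x _
    have hsum : ∑ i, c i * x i
        = (∑ i, if ε i then x i else 0) - (∑ i, if ε' i then x i else 0) := by
      rw [← Finset.sum_sub_distrib]
      apply Finset.sum_congr rfl
      intro i _
      by_cases h1 : ε i <;> by_cases h2 : ε' i <;> simp [hcdef, h1, h2]
    rw [hsum, sub_eq_zero]
  rw [hfilter]
  exact fiber_card q L c i₀ hc 0

lemma sum_sq_eq (q L : ℕ) [NeZero q] (x : Fin L → ZMod q) :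
    Wsum q L x
      = ∑ ε : Fin L → Bool, ∑ ε' : Fin L → Bool,
          if (∑ i, if ε i then x i else 0) = (∑ i, if ε' i then x i else 0) then 1 else 0 := by
  classical
  have hN : ∀ t : ZMod q, Ncount q L x t
      = ∑ ε : Fin L → Bool, if (∑ i, if ε i then x i else 0) = t then 1 else 0 := by
    intro t; rw [Ncount, Finset.card_filter]
  have key : ∀ a b : ZMod q,
      (∑ t : ZMod q, (if a = t then (1:ℕ) else 0) * (if b = t then 1 else 0))
        = if a = b then 1 else 0 := by
    intro a b
    simp only [ite_mul, one_mul, zero_mul]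
    rw [Finset.sum_ite_eq]
    simp [eq_comm]
  rw [Wsum]
  simp_rw [hN, pow_two, Finset.sum_mul_sum]
  rw [Finset.sum_comm]
  refine Finset.sum_congr rfl fun ε _ => ?_
  rw [Finset.sum_comm]
  exact Finset.sum_congr rfl fun ε' _ => key _ _

lemma row_sum (q L : ℕ) [NeZero q] (x : Fin L → ZMod q) :
    ∑ t : ZMod q, Ncount q L x t = 2 ^ L := by
  classical
  have h := Finset.card_eq_sum_card_fiberwise
    (s := (Finset.univ : Finset (Fin L → Bool))) (t := (Finset.univ : Finset (ZMod q)))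
    (f := fun ε => ∑ i, if ε i then x i else 0) (fun ε _ => Finset.mem_univ _)
  rw [Finset.card_univ] at h
  simp only [Ncount]
  rw [← h]
  simp

lemma total_count (q L : ℕ) [NeZero q] :
    q * (∑ x : Fin L → ZMod q, Wsum q L x) + 2^L * q^L
      = q * 2^L * q^L + 2^L * 2^L * q^L := by
  classical
  have h1 : (∑ x : Fin L → ZMod q, Wsum q L x)
      = ∑ ε : Fin L → Bool, ∑ ε' : Fin L → Bool,
          (Finset.univ.filter fun x : Fin L → ZMod q =>
            (∑ i, if ε i then x i else 0) = (∑ i, if ε' i then x i else 0)).card := by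
    simp_rw [sum_sq_eq q L]
    rw [Finset.sum_comm]
    refine Finset.sum_congr rfl fun ε _ => ?_
    rw [Finset.sum_comm]
    refine Finset.sum_congr rfl fun ε' _ => ?_
    exact (Finset.card_filter _ _).symm
  have h2 : ∀ ε : Fin L → Bool,
      q * (∑ ε' : Fin L → Bool,
          (Finset.univ.filter fun x : Fin L → ZMod q =>
            (∑ i, if ε i then x i else 0) = (∑ i, if ε' i then x i else 0)).card)
        = q * q^L + (2^L - 1) * q^L := by
    intro ε
    rw [Finset.mul_sum, ← Finset.add_sum_erase _ _ (Finset.mem_univ ε)]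
    congr 1
    · have h3 : (Finset.univ.filter fun x : Fin L → ZMod q =>
          (∑ i, if ε i then x i else 0) = (∑ i, if ε i then x i else 0)) = Finset.univ := by
        simp
      rw [h3, Finset.card_univ]
      simp [ZMod.card]
    · rw [Finset.sum_congr rfl (fun ε' hε' => pair_card q L ε ε'
        (Ne.symm (Finset.ne_of_mem_erase hε')))]
      rw [Finset.sum_const, smul_eq_mul, Finset.card_erase_of_mem (Finset.mem_univ ε),
        Finset.card_univ]
      simp
  rw [h1, Finset.mul_sum, Finset.sum_congr rfl (fun ε _ => h2 ε), Finset.sum_const,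
    smul_eq_mul, Finset.card_univ]
  have hP : 1 ≤ 2^L := Nat.one_le_two_pow
  have hcard : Fintype.card (Fin L → Bool) = 2 ^ L := by simp
  rw [hcard]
  zify [hP]
  ring

lemma cs_all (q L : ℕ) [NeZero q] (x : Fin L → ZMod q) :
    ((2:ℝ)^L) * 2^L ≤ (q:ℝ) * (Wsum q L x : ℝ) := by
  have hcs : (∑ t : ZMod q, (Ncount q L x t : ℝ))^2
      ≤ (((Finset.univ : Finset (ZMod q)).card : ℕ) : ℝ)
        * ∑ t : ZMod q, (Ncount q L x t : ℝ)^2 :=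
    sq_sum_le_card_mul_sum_sq
  have hz : (Finset.univ : Finset (ZMod q)).card = q := by
    rw [Finset.card_univ, ZMod.card q]
  have hN : (∑ t : ZMod q, (Ncount q L x t : ℝ)) = 2^L := by
    rw [← Nat.cast_sum, row_sum q L x]; push_cast; ring
  have hW : (Wsum q L x : ℝ) = ∑ t : ZMod q, (Ncount q L x t : ℝ)^2 := by
    rw [Wsum]; push_cast; ring
  rw [hz, hN] at hcs
  rw [hW]
  calc ((2:ℝ)^L) * 2^L = ((2:ℝ)^L)^2 := by ring
  _ ≤ _ := hcs

lemma cs_bad (q L : ℕ) [NeZero q] (hq : 0 < q) (x : Fin L → ZMod q) (t₀ : ZMod q)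
    (h0 : Ncount q L x t₀ = 0) :
    ((2:ℝ)^L) * 2^L ≤ ((q:ℝ) - 1) * (Wsum q L x : ℝ) := by
  have hq1 : (1:ℝ) ≤ (q:ℝ) := by exact_mod_cast hq
  have hsum' : ∑ t ∈ Finset.univ.erase t₀, (Ncount q L x t : ℝ) = 2^L := by
    rw [Finset.sum_erase _ (by rw [h0]; norm_num)]
    rw [← Nat.cast_sum, row_sum q L x]; push_cast; ring
  have hcs : (∑ t ∈ Finset.univ.erase t₀, (Ncount q L x t : ℝ))^2
      ≤ ((Finset.univ.erase t₀).card : ℝ)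
        * ∑ t ∈ Finset.univ.erase t₀, (Ncount q L x t : ℝ)^2 :=
    sq_sum_le_card_mul_sum_sq
  have hz : (Finset.univ : Finset (ZMod q)).card = q := by
    rw [Finset.card_univ, ZMod.card q]
  rw [hsum', Finset.card_erase_of_mem (Finset.mem_univ t₀), hz] at hcs
  have hq1' : ((q - 1 : ℕ) : ℝ) = (q:ℝ) - 1 := by
    rw [Nat.cast_sub hq]; norm_num
  rw [hq1'] at hcs
  have hW : (Wsum q L x : ℝ) = ∑ t : ZMod q, (Ncount q L x t : ℝ)^2 := by
    rw [Wsum]; push_cast; ring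
  have hle : ∑ t ∈ Finset.univ.erase t₀, (Ncount q L x t : ℝ)^2 ≤ (Wsum q L x : ℝ) := by
    rw [hW]
    exact Finset.sum_le_sum_of_subset_of_nonneg (Finset.erase_subset t₀ _)
      (fun t _ _ => by positivity)
  calc ((2:ℝ)^L) * 2^L = ((2:ℝ)^L)^2 := by ring
  _ ≤ ((q:ℝ) - 1) * ∑ t ∈ Finset.univ.erase t₀, (Ncount q L x t : ℝ)^2 := hcs
  _ ≤ ((q:ℝ) - 1) * (Wsum q L x : ℝ) := by
      apply mul_le_mul_of_nonneg_left hle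
      linarith

lemma combine_bound (q L : ℕ) (hq : 0 < q) (bc gc : ℕ) (TB TG : ℝ)
    (hTB0 : 0 ≤ TB) (hTG0 : 0 ≤ TG)
    (r1 : (bc:ℝ) * (2^L*2^L) ≤ ((q:ℝ)-1) * TB)
    (r2 : (gc:ℝ) * (2^L*2^L) ≤ (q:ℝ) * TG)
    (r3 : (q:ℝ) * (TG + TB) + 2^L*(q:ℝ)^L = (q:ℝ)*2^L*(q:ℝ)^L + 2^L*2^L*(q:ℝ)^L)
    (r4 : (gc:ℝ) + (bc:ℝ) = (q:ℝ)^L) :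
    ((1:ℝ) - (q:ℝ)^2/2^L) * (q:ℝ)^L ≤ (gc:ℝ) := by
  have hq1 : (1:ℝ) ≤ (q:ℝ) := by exact_mod_cast hq
  have hP0 : (0:ℝ) < 2^L := by positivity
  have hG : (gc:ℝ) = (q:ℝ)^L - (bc:ℝ) := by linarith
  rw [hG] at r2 ⊢
  have e1 : (q:ℝ) * ((bc:ℝ) * (2^L*2^L)) ≤ (q:ℝ) * (((q:ℝ)-1) * TB) :=
    mul_le_mul_of_nonneg_left r1 (by linarith)
  have e2 : ((q:ℝ)-1) * (((q:ℝ)^L - (bc:ℝ)) * (2^L*2^L)) ≤ ((q:ℝ)-1) * ((q:ℝ) * TG) :=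
    mul_le_mul_of_nonneg_left r2 (by linarith)
  have e3 : ((q:ℝ)-1) * ((q:ℝ) * (TG + TB) + 2^L*(q:ℝ)^L)
      = ((q:ℝ)-1) * ((q:ℝ)*2^L*(q:ℝ)^L + 2^L*2^L*(q:ℝ)^L) := by rw [r3]
  have hpq : (0:ℝ) < 2^L * (q:ℝ)^L := by positivity
  have hrpq : (2:ℝ)^L * (q:ℝ)^L ≤ (q:ℝ) * (2^L * (q:ℝ)^L) :=
    le_mul_of_one_le_left (le_of_lt hpq) hq1
  have key : (bc:ℝ) * (2^L * 2^L) ≤ (q:ℝ)^2 * (2^L * (q:ℝ)^L) := by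
    nlinarith [e1, e2, e3, hrpq]
  have hB' : (bc:ℝ) * 2^L ≤ (q:ℝ)^2 * (q:ℝ)^L := by
    have h2 : ((bc:ℝ) * 2^L) * 2^L ≤ ((q:ℝ)^2 * (q:ℝ)^L) * 2^L := by nlinarith [key]
    exact le_of_mul_le_mul_right h2 hP0
  have hdiv : (bc:ℝ) ≤ (q:ℝ)^2 * (q:ℝ)^L / 2^L := by
    rw [le_div_iff₀ hP0]; exact hB'
  have hring : (q:ℝ)^2 / 2^L * (q:ℝ)^L = (q:ℝ)^2 * (q:ℝ)^L / 2^L := by ring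
  nlinarith [hdiv, hring]

/-- Let `q, L` be positive integers with `2^L ≥ q`.  If `x_1,...,x_L` are chosen
independently and uniformly at random from `ℤ/qℤ`, then with probability at least
`1 - q² 2^{-L}`, every element of `ℤ/qℤ` is a subset sum `∑ ε_i x_i`, `ε ∈ {0,1}^L`. -/
theorem stmt_2 (q L : ℕ) (hq : 0 < q) (hL : 0 < L) (hqL : q ≤ 2 ^ L) :
    ((1 : ℝ) - (q : ℝ) ^ 2 / 2 ^ L) * (q : ℝ) ^ L ≤
      (Nat.card {x : Fin L → ZMod q //
        ∀ t : ZMod q, ∃ ε : Fin L → Bool, (∑ i, if ε i then x i else 0) = t} : ℝ) := by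
  classical
  haveI : NeZero q := ⟨hq.ne'⟩
  set G : Finset (Fin L → ZMod q) := Finset.univ.filter
    (fun x => ∀ t : ZMod q, ∃ ε : Fin L → Bool, (∑ i, if ε i then x i else 0) = t) with hGdef
  set B : Finset (Fin L → ZMod q) := Finset.univ.filter
    (fun x => ¬ ∀ t : ZMod q, ∃ ε : Fin L → Bool, (∑ i, if ε i then x i else 0) = t) with hBdef
  have hcardP : Nat.card {x : Fin L → ZMod q //
      ∀ t : ZMod q, ∃ ε : Fin L → Bool, (∑ i, if ε i then x i else 0) = t} = G.card := by
    rw [Nat.card_eq_fintype_card, Fintype.card_subtype]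
  rw [hcardP]
  -- inequalities over the bad set
  have r1 : (B.card : ℝ) * (2^L*2^L) ≤ ((q:ℝ) - 1) * ∑ x ∈ B, (Wsum q L x : ℝ) := by
    rw [Finset.mul_sum]
    calc (B.card : ℝ) * (2^L*2^L) = ∑ _x ∈ B, ((2:ℝ)^L*2^L) := by
          rw [Finset.sum_const, nsmul_eq_mul]
    _ ≤ _ := by
          refine Finset.sum_le_sum fun x hx => ?_
          have hx' := (Finset.mem_filter.mp hx).2
          push_neg at hx'
          obtain ⟨t₀, ht₀⟩ := hx'
          refine cs_bad q L hq x t₀ ?_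
          rw [Ncount, Finset.card_eq_zero, Finset.filter_eq_empty_iff]
          intro ε _
          exact ht₀ ε
  have r2 : (G.card : ℝ) * (2^L*2^L) ≤ (q:ℝ) * ∑ x ∈ G, (Wsum q L x : ℝ) := by
    rw [Finset.mul_sum]
    calc (G.card : ℝ) * (2^L*2^L) = ∑ _x ∈ G, ((2:ℝ)^L*2^L) := by
          rw [Finset.sum_const, nsmul_eq_mul]
    _ ≤ _ := Finset.sum_le_sum fun x _ => cs_all q L x
  have r3 : (q:ℝ) * ((∑ x ∈ G, (Wsum q L x:ℝ)) + ∑ x ∈ B, (Wsum q L x:ℝ)) + 2^L * (q:ℝ)^L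
      = (q:ℝ) * 2^L * (q:ℝ)^L + 2^L * 2^L * (q:ℝ)^L := by
    have hsplit : (∑ x ∈ G, Wsum q L x) + ∑ x ∈ B, Wsum q L x
        = ∑ x : Fin L → ZMod q, Wsum q L x :=
      Finset.sum_filter_add_sum_filter_not Finset.univ _ _
    have htot := total_count q L
    rw [← hsplit] at htot
    exact_mod_cast htot
  have r4 : (G.card : ℝ) + (B.card : ℝ) = (q:ℝ)^L := by
    have h := Finset.card_filter_add_card_filter_not (s := (Finset.univ : Finset (Fin L → ZMod q)))
      (p := fun x => ∀ t : ZMod q, ∃ ε : Fin L → Bool, (∑ i, if ε i then x i else 0) = t)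
    rw [Finset.card_univ] at h
    have hcard : Fintype.card (Fin L → ZMod q) = q ^ L := by simp [ZMod.card]
    rw [hcard] at h
    exact_mod_cast h
  exact combine_bound q L hq B.card G.card (∑ x ∈ B, (Wsum q L x:ℝ)) (∑ x ∈ G, (Wsum q L x:ℝ))
    (Finset.sum_nonneg fun x _ => by positivity)
    (Finset.sum_nonneg fun x _ => by positivity)
    r1 r2 r3 r4
end

section
/- For a fixed nonzero t ∈ ℤ/qℤ and independent uniform x_1,...,x_L ∈ ℤ/qℤ, let X_t be the number of nonzero ε ∈ {0,1}^L with ε·x = t. Then Var(X_t) = μ(1 − 1/q) where μ = (2^L − 1)/q. -/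
/-!
Write `φ_ε(x) = ∑_{ε_i = 1} x_i`, so that `X_t(x) = #{ε ≠ 0 | φ_ε(x) = t}`. For `ε ≠ 0` the form
`φ_ε` is a surjective homomorphism `(ℤ/qℤ)^L → ℤ/qℤ`, and for distinct nonzero `ε, δ` the pair
`(φ_ε, φ_δ)` is surjective onto `(ℤ/qℤ)^2`. Hence the events `φ_ε(x) = t` have probability `1/q`
and are pairwise independent, and the variance of a sum of `n` pairwise independent indicators of
probability `p` is `n p (1 - p)`, here with `n = 2^L - 1`.
-/

open Finset

section Counting

variable {ι A B : Type*} [AddGroup A] [Fintype A] [AddMonoid B] [Fintype B] [DecidableEq B]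

theorem AddMonoidHom.card_fiber_mul_card_of_surjective (f : A →+ B)
    (hf : Function.Surjective f) (b : B) :
    #{a | f a = b} * Fintype.card B = Fintype.card A := by
  have h := card_eq_sum_card_fiberwise (s := univ) (t := univ) (f := f) fun _ _ => mem_univ _
  rw [card_univ, sum_congr rfl fun c _ => card_fiber_eq_of_mem_range f (hf c) (hf b), sum_const,
    card_univ, smul_eq_mul] at h
  rw [h, mul_comm]

theorem AddMonoidHom.card_fiber_eq_div_of_surjective (f : A →+ B)
    (hf : Function.Surjective f) (b : B) :
    (#{a | f a = b} : ℝ) = Fintype.card A / Fintype.card B := by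
  rw [← f.card_fiber_mul_card_of_surjective hf b, Nat.cast_mul, mul_div_cancel_right₀]
  exact Nat.cast_ne_zero.2 Fintype.card_ne_zero

variable (s : Finset ι) (f : ι → A →+ B) (b : B)

theorem sum_card_filter_apply_eq (hf : ∀ i ∈ s, Function.Surjective (f i)) :
    ∑ a, (#{i ∈ s | f i a = b} : ℝ) = #s * Fintype.card A / Fintype.card B := by
  simp only [natCast_card_filter]
  rw [sum_comm, sum_congr rfl fun i hi => ?_, sum_const, nsmul_eq_mul, mul_div_assoc]
  rw [sum_boole, (f i).card_fiber_eq_div_of_surjective (hf i hi)]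

theorem card_filter_apply_eq_and_apply_eq {i j : ι}
    (hij : Function.Surjective ((f i).prod (f j))) :
    (#{a | f i a = b ∧ f j a = b} : ℝ) = Fintype.card A / Fintype.card B ^ 2 := by
  have hfiber : #{a | f i a = b ∧ f j a = b} = #{a | (f i).prod (f j) a = (b, b)} := by
    simp [Prod.ext_iff]
  rw [hfiber, ((f i).prod (f j)).card_fiber_eq_div_of_surjective hij, Fintype.card_prod, sq,
    Nat.cast_mul]

theorem sum_sq_card_filter_apply_eq (hf : ∀ i ∈ s, Function.Surjective (f i))
    (hf₂ : ∀ i ∈ s, ∀ j ∈ s, i ≠ j → Function.Surjective ((f i).prod (f j))) :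
    ∑ a, (#{i ∈ s | f i a = b} : ℝ) ^ 2 =
      #s * Fintype.card A / Fintype.card B
        + (#s ^ 2 - #s) * Fintype.card A / Fintype.card B ^ 2 := by
  classical
  set p : ℝ := Fintype.card A / Fintype.card B
  set p₂ : ℝ := Fintype.card A / Fintype.card B ^ 2
  have hpair : ∀ i ∈ s, ∀ j ∈ s,
      (#{a | f i a = b ∧ f j a = b} : ℝ) = p₂ + if i = j then p - p₂ else 0 := by
    intro i hi j hj
    split_ifs with h
    · subst h
      simp only [and_self, (f i).card_fiber_eq_div_of_surjective (hf i hi)]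
      ring
    · rw [card_filter_apply_eq_and_apply_eq f b (hf₂ i hi j hj h), add_zero]
  calc ∑ a, (#{i ∈ s | f i a = b} : ℝ) ^ 2
      = ∑ i ∈ s, ∑ j ∈ s, (#{a | f i a = b ∧ f j a = b} : ℝ) := by
        simp only [natCast_card_filter, sq, sum_mul_sum, ite_zero_mul_ite_zero, mul_one]
        rw [sum_comm]
        exact sum_congr rfl fun _ _ => sum_comm
    _ = ∑ i ∈ s, ∑ j ∈ s, (p₂ + if i = j then p - p₂ else 0) :=
        sum_congr rfl fun i hi => sum_congr rfl fun j hj => hpair i hi j hj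
    _ = _ := by
        simp only [sum_add_distrib, sum_const, nsmul_eq_mul, sum_ite_eq, sum_ite_mem, inter_self]
        ring

theorem variance_card_filter_apply_eq (hf : ∀ i ∈ s, Function.Surjective (f i))
    (hf₂ : ∀ i ∈ s, ∀ j ∈ s, i ≠ j → Function.Surjective ((f i).prod (f j))) :
    (∑ a, (#{i ∈ s | f i a = b} : ℝ) ^ 2) / Fintype.card A
        - ((∑ a, (#{i ∈ s | f i a = b} : ℝ)) / Fintype.card A) ^ 2
      = #s / Fintype.card B * (1 - 1 / Fintype.card B) := by
  have hA : (Fintype.card A : ℝ) ≠ 0 := Nat.cast_ne_zero.2 Fintype.card_ne_zero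
  have hB : (Fintype.card B : ℝ) ≠ 0 := Nat.cast_ne_zero.2 Fintype.card_ne_zero
  rw [sum_sq_card_filter_apply_eq s f b hf hf₂, sum_card_filter_apply_eq s f b hf]
  field_simp
  ring

end Counting

theorem exists_eq_true_of_ne_false {ι : Type*} {ε : ι → Bool} (hε : ε ≠ fun _ => false) :
    ∃ i, ε i = true := by
  simpa [Function.ne_iff] using hε

section MaskedSum

variable {ι M : Type*} [Fintype ι]

def maskedSum [AddCommMonoid M] (ε : ι → Bool) : (ι → M) →+ M where
  toFun x := ∑ i, if ε i then x i else 0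
  map_zero' := by simp
  map_add' x y := by simp only [Pi.add_apply, ← sum_add_distrib, ite_add_ite, add_zero]

theorem maskedSum_apply [AddCommMonoid M] (ε : ι → Bool) (x : ι → M) :
    maskedSum ε x = ∑ i, if ε i then x i else 0 := rfl

theorem maskedSum_single [AddCommMonoid M] [DecidableEq ι] (ε : ι → Bool) (j : ι) (a : M) :
    maskedSum ε (Pi.single j a) = if ε j then a else 0 := by
  rw [maskedSum_apply, sum_eq_single j]
  · simp
  · intro i _ hij
    simp [Pi.single_eq_of_ne hij]
  · simp

theorem maskedSum_surjective [AddCommMonoid M] {ε : ι → Bool} (hε : ε ≠ fun _ => false) :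
    Function.Surjective (maskedSum (M := M) ε) := by
  classical
  obtain ⟨i, hi⟩ := exists_eq_true_of_ne_false hε
  exact fun a => ⟨Pi.single i a, by rw [maskedSum_single, hi, if_pos rfl]⟩

theorem maskedSum_prod_surjective_of_apply_true_of_apply_false [AddCommGroup M]
    {ε δ : ι → Bool} {i : ι} (hεi : ε i = true) (hδi : δ i = false)
    (hδ : δ ≠ fun _ => false) :
    Function.Surjective ((maskedSum (M := M) ε).prod (maskedSum δ)) := by
  classical
  obtain ⟨j, hj⟩ := exists_eq_true_of_ne_false hδ
  have hji : j ≠ i := by rintro rfl; simp [hj] at hδi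
  rintro ⟨u, v⟩
  -- the coordinate `i` is seen by `ε` only, so it corrects the `ε`-sum without moving the `δ`-sum
  refine ⟨Pi.single j v + Pi.single i (u - if ε j then v else 0), ?_⟩
  simp only [AddMonoidHom.prod_apply, map_add, maskedSum_single, hεi, hδi, hj, if_true,
    Bool.false_eq_true, if_false, Prod.mk_add_mk, add_zero, add_sub_cancel]

theorem maskedSum_prod_surjective [AddCommGroup M] {ε δ : ι → Bool} (hεδ : ε ≠ δ)
    (hε : ε ≠ fun _ => false) (hδ : δ ≠ fun _ => false) :
    Function.Surjective ((maskedSum (M := M) ε).prod (maskedSum δ)) := by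
  obtain ⟨i, hi⟩ := Function.ne_iff.1 hεδ
  cases hεi : ε i
  · have hδi : δ i = true := by simpa [hεi] using hi
    exact Prod.swap_surjective.comp
      (maskedSum_prod_surjective_of_apply_true_of_apply_false hδi hεi hε)
  · have hδi : δ i = false := by simpa [hεi] using hi
    exact maskedSum_prod_surjective_of_apply_true_of_apply_false hεi hδi hδ

end MaskedSum

theorem stmt_4_general (q L : ℕ) [NeZero q] (t : ZMod q)
    (X : (Fin L → ZMod q) → ℕ)
    (hX : ∀ x, X x = Nat.card {ε : Fin L → Bool //
          ε ≠ (fun _ => false) ∧ (∑ i, if ε i then x i else 0) = t}) :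
    (∑ x : Fin L → ZMod q, (X x : ℝ) ^ 2) / q ^ L
        - ((∑ x : Fin L → ZMod q, (X x : ℝ)) / q ^ L) ^ 2
      = (((2 : ℝ) ^ L - 1) / q) * (1 - 1 / q) := by
  set s : Finset (Fin L → Bool) := {ε | ε ≠ fun _ => false}
  have hXs : ∀ x, X x = #{ε ∈ s | maskedSum ε x = t} := fun x => by
    rw [hX, Nat.card_eq_fintype_card, Fintype.card_subtype, filter_filter]
    rfl
  have hs : (#s : ℝ) = 2 ^ L - 1 := by
    simp [s, filter_ne', card_erase_of_mem, Nat.cast_sub Nat.one_le_two_pow]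
  have hvar := variance_card_filter_apply_eq s maskedSum t
    (fun ε hε => maskedSum_surjective (mem_filter.1 hε).2)
    (fun ε hε δ hδ hεδ => maskedSum_prod_surjective hεδ (mem_filter.1 hε).2 (mem_filter.1 hδ).2)
  simpa [hXs, hs] using hvar

/-- For a fixed nonzero `t ∈ ℤ/qℤ` and independent uniform `x_1,...,x_L ∈ ℤ/qℤ`, let
`X_t` be the number of nonzero `ε ∈ {0,1}^L` with `ε ⬝ x = t`.  Then
`Var(X_t) = μ (1 - 1/q)` where `μ = (2^L - 1)/q`. -/
theorem stmt_4 (q L : ℕ) [NeZero q] (hL : 0 < L) (t : ZMod q) (ht : t ≠ 0)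
    (X : (Fin L → ZMod q) → ℕ)
    (hX : ∀ x, X x = Nat.card {ε : Fin L → Bool //
          ε ≠ (fun _ => false) ∧ (∑ i, if ε i then x i else 0) = t}) :
    (∑ x : Fin L → ZMod q, (X x : ℝ) ^ 2) / q ^ L
        - ((∑ x : Fin L → ZMod q, (X x : ℝ)) / q ^ L) ^ 2
      = (((2 : ℝ) ^ L - 1) / q) * (1 - 1 / q) :=
  stmt_4_general q L t X hX
end

section
/- Let A₀ = {a_1 < a_2 < ⋯} ⊆ ℤ_{>0} satisfy a_i ≥ i/γ for all i ≥ 1, where 0 < γ ≤ 1. Then for every N, the number of elements of the additive semigroup generated by A₀ lying in [1,N] is at most ∑_{n=0}^{⌊γN⌋} p(n), where p(n) is the number of integer partitions of n. -/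
lemma parts_eq_of_heq {n m : ℕ} (h : n = m) {p : Nat.Partition n} {q : Nat.Partition m}
    (h2 : HEq p q) : p.parts = q.parts := by
  subst h; rw [eq_of_heq h2]

/-- Let `A₀ = {a_1 < a_2 < ⋯} ⊆ ℤ_{>0}` satisfy `a_i ≥ i/γ` for all `i ≥ 1`, where
`0 < γ ≤ 1`.  Then for every `N`, the number of elements of the additive semigroup
generated by `A₀` lying in `[1,N]` is at most `∑_{n=0}^{⌊γN⌋} p(n)`, where `p(n)` is the
number of integer partitions of `n`. -/
theorem stmt_6 (A₀ : Set ℕ) (hpos : ∀ a ∈ A₀, 0 < a) (γ : ℝ) (hγ0 : 0 < γ) (hγ1 : γ ≤ 1)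
    (f : ℕ → ℕ) (hf : StrictMono f) (hrange : Set.range f = A₀)
    (hgrow : ∀ i : ℕ, ((i : ℝ) + 1) / γ ≤ (f i : ℝ)) (N : ℕ) :
    Nat.card ↥((AddSubmonoid.closure A₀ : Set ℕ) ∩ Set.Icc 1 N) ≤
      ∑ n ∈ Finset.range (⌊γ * N⌋₊ + 1), Fintype.card (Nat.Partition n) := by
  classical
  set k := ⌊γ * N⌋₊ + 1 with hk
  set S := (AddSubmonoid.closure A₀ : Set ℕ) ∩ Set.Icc 1 N with hS
  set g : ℕ → ℕ := fun a => Function.invFun f a + 1 with hg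
  have hinv : ∀ a ∈ A₀, f (g a - 1) = a := by
    intro a ha
    rw [← hrange] at ha
    simpa [hg] using Function.invFun_eq ha
  -- for each element of S choose a multiset representation
  have key : ∀ x : ↥S, ∃ l : Multiset ℕ, (∀ y ∈ l, y ∈ A₀) ∧ l.sum = (x : ℕ) := by
    rintro ⟨m, hm, -⟩
    exact AddSubmonoid.exists_multiset_of_mem_closure hm
  choose l hlA hlsum using key
  -- γ * f i ≥ i + 1
  have hgi : ∀ a ∈ A₀, ((g a : ℕ) : ℝ) ≤ γ * a := by
    intro a ha
    have h := hgrow (g a - 1)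
    rw [div_le_iff₀ hγ0, hinv a ha] at h
    have : ((g a - 1 : ℕ) : ℝ) + 1 = (g a : ℝ) := by
      simp [hg]
    rw [this] at h
    linarith [h]
  -- the bound on the partition size
  have hbound : ∀ x : ↥S, ((l x).map g).sum < k := by
    intro x
    have hxN : (x : ℕ) ≤ N := x.2.2.2
    have h1 : ((((l x).map g).sum : ℕ) : ℝ) ≤ γ * ((x : ℕ) : ℝ) := by
      rw [Nat.cast_multiset_sum, Multiset.map_map]
      calc ((l x).map ((Nat.cast : ℕ → ℝ) ∘ g)).sum
          ≤ ((l x).map (fun a : ℕ => γ * (a : ℝ))).sum := by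
            apply Multiset.sum_map_le_sum_map
            intro a ha
            exact hgi a (hlA x a ha)
        _ = γ * ((l x).map (fun a : ℕ => (a : ℝ))).sum := by
            rw [Multiset.sum_map_mul_left]
        _ = γ * ((x : ℕ) : ℝ) := by
            rw [show ((l x).map (fun a : ℕ => (a : ℝ))) = (l x).map Nat.cast from rfl,
              ← Nat.cast_multiset_sum, hlsum x]
    have h2 : (((l x).map g).sum : ℝ) ≤ γ * N := by
      have : γ * ((x : ℕ) : ℝ) ≤ γ * N := by
        apply mul_le_mul_of_nonneg_left _ hγ0.le
        exact_mod_cast hxN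
      linarith
    have := Nat.le_floor h2
    omega
  -- build the partition map
  let Φ : ↥S → Σ n : Fin k, Nat.Partition n := fun x =>
    ⟨⟨((l x).map g).sum, hbound x⟩,
      { parts := (l x).map g
        parts_pos := by
          intro i hi
          obtain ⟨a, -, rfl⟩ := Multiset.mem_map.mp hi
          simp [hg]
        parts_sum := rfl }⟩
  have hrec : ∀ x : ↥S, (((l x).map g).map (fun j => f (j - 1))).sum = (x : ℕ) := by
    intro x
    rw [Multiset.map_map]
    have : (l x).map (fun a => f (g a - 1)) = (l x).map id := by
      apply Multiset.map_congr rfl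
      intro a ha
      exact hinv a (hlA x a ha)
    rw [show ((fun j => f (j - 1)) ∘ g) = fun a => f (g a - 1) from rfl, this,
      Multiset.map_id, hlsum x]
  have hΦinj : Function.Injective Φ := by
    intro x y h
    rw [Sigma.ext_iff] at h
    obtain ⟨h1, h2⟩ := h
    have hfst : ((l x).map g).sum = ((l y).map g).sum := congrArg Fin.val h1
    have hparts : (l x).map g = (l y).map g := parts_eq_of_heq hfst h2
    have : (x : ℕ) = (y : ℕ) := by
      rw [← hrec x, ← hrec y, hparts]
    exact Subtype.ext this
  calc Nat.card ↥S ≤ Nat.card (Σ n : Fin k, Nat.Partition n) :=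
        Nat.card_le_card_of_injective Φ hΦinj
    _ = ∑ n ∈ Finset.range k, Fintype.card (Nat.Partition n) := by
        rw [Nat.card_eq_fintype_card, Fintype.card_sigma,
          ← Fin.sum_univ_eq_sum_range (fun n => Fintype.card (Nat.Partition n)) k]
end

section
/- Let q, ℓ be positive integers with ℓ ≤ q. Let (y_1,...,y_ℓ) be a uniformly random sequence of distinct elements of ℤ/qℤ, let (z_1,...,z_ℓ) be independent uniform elements of ℤ/qℤ (independent of the y's), and let (x_1,...,x_ℓ) be chosen uniformly at random among sequences with entries in {y_1,...,y_ℓ} subject to: x_i = x_j if and only if z_i = z_j. Then (x_1,...,x_ℓ) is distributed as ℓ independent uniform elements of ℤ/qℤ. -/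
open MeasureTheory Function Set


/-- Functions with prescribed equality pattern and values in `S` correspond to
embeddings of `range x₀` into `S`. -/
noncomputable def patEquiv {α β γ : Type*} (x₀ : α → β) (S : Set γ) :
    {z : α → γ // (∀ i, z i ∈ S) ∧ ∀ i j, z i = z j ↔ x₀ i = x₀ j} ≃ (Set.range x₀ ↪ S) where
  toFun z := ⟨fun t => ⟨z.1 t.2.choose, z.2.1 _⟩, by
    intro s t hst
    have h1 : x₀ s.2.choose = s.1 := s.2.choose_spec
    have h2 : x₀ t.2.choose = t.1 := t.2.choose_spec
    have := (z.2.2 s.2.choose t.2.choose).mp (congrArg Subtype.val hst)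
    exact Subtype.ext (h1 ▸ h2 ▸ this)⟩
  invFun g := ⟨fun i => (g ⟨x₀ i, ⟨i, rfl⟩⟩).1, fun i => (g _).2, by
    intro i j
    constructor
    · intro h
      have := g.injective (Subtype.ext h)
      simpa using congrArg Subtype.val this
    · intro h
      have : (⟨x₀ i, ⟨i, rfl⟩⟩ : Set.range x₀) = ⟨x₀ j, ⟨j, rfl⟩⟩ := Subtype.ext h
      simp only [this]⟩
  left_inv z := by
    apply Subtype.ext
    funext i
    exact (z.2.2 _ i).mpr ((⟨x₀ i, ⟨i, rfl⟩⟩ : Set.range x₀)).2.choose_spec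
  right_inv g := by
    apply DFunLike.ext
    intro t
    apply Subtype.ext
    exact congrArg (fun u => (g u).1) (Subtype.ext t.2.choose_spec)

lemma natCard_embedding {A B : Type*} [Finite A] [Finite B] :
    Nat.card (A ↪ B) = (Nat.card B).descFactorial (Nat.card A) := by
  classical
  cases nonempty_fintype A
  cases nonempty_fintype B
  simp [Nat.card_eq_fintype_card, Fintype.card_embedding_eq]

open Classical in
/-- Glue an embedding on preferred positions with a map elsewhere. -/
noncomputable def glue {α β : Type*} (T : Set β) (h : T ↪ α)
    (g : ((Set.range (⇑h))ᶜ : Set α) → β) : α → β :=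
  fun i => if hi : i ∈ Set.range ⇑h then (hi.choose : T).1 else g ⟨i, hi⟩

lemma glue_apply_mem {α β : Type*} (T : Set β) (h : T ↪ α)
    (g : ((Set.range (⇑h))ᶜ : Set α) → β) (t : T) : glue T h g (h t) = t.1 := by
  have hi : h t ∈ Set.range ⇑h := ⟨t, rfl⟩
  rw [glue, dif_pos hi]
  exact congrArg Subtype.val (h.injective hi.choose_spec)

lemma glue_apply_not_mem {α β : Type*} (T : Set β) (h : T ↪ α)
    (g : ((Set.range (⇑h))ᶜ : Set α) → β) (i : α) (hi : i ∉ Set.range ⇑h) :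
    glue T h g i = g ⟨i, hi⟩ := dif_neg hi

section supEquiv

variable {α β : Type*} [Nonempty α] (T : Set β)

noncomputable def supFwdH (y : {y : α → β // Function.Injective y ∧ T ⊆ Set.range y}) :
    T ↪ α :=
  ⟨fun t => Function.invFun y.1 t.1, by
    intro s t hst
    have hs : y.1 (Function.invFun y.1 s.1) = s.1 := Function.invFun_eq (y.2.2 s.2)
    have ht : y.1 (Function.invFun y.1 t.1) = t.1 := Function.invFun_eq (y.2.2 t.2)
    apply Subtype.ext
    rw [← hs, ← ht]
    exact congrArg y.1 hst⟩

lemma supFwdH_spec (y : {y : α → β // Function.Injective y ∧ T ⊆ Set.range y}) (t : T) :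
    y.1 (supFwdH T y t) = t.1 :=
  Function.invFun_eq (y.2.2 t.2)

noncomputable def supFwdG (y : {y : α → β // Function.Injective y ∧ T ⊆ Set.range y}) :
    ((Set.range (⇑(supFwdH T y)))ᶜ : Set α) ↪ ((Tᶜ : Set β)) :=
  ⟨fun i => ⟨y.1 i.1, by
    intro hmem
    apply i.2
    refine ⟨⟨y.1 i.1, hmem⟩, ?_⟩
    exact y.2.1 (supFwdH_spec T y ⟨y.1 i.1, hmem⟩)⟩, by
    intro i j hij
    exact Subtype.ext (y.2.1 (congrArg Subtype.val hij))⟩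

lemma glue_injective (h : T ↪ α) (g : ((Set.range (⇑h))ᶜ : Set α) ↪ ((Tᶜ : Set β))) :
    Function.Injective (glue T h (fun i => (g i).1)) := by
  intro i j hij
  by_cases hi : i ∈ Set.range ⇑h <;> by_cases hj : j ∈ Set.range ⇑h
  · obtain ⟨s, rfl⟩ := hi; obtain ⟨t, rfl⟩ := hj
    rw [glue_apply_mem, glue_apply_mem] at hij
    exact congrArg _ (Subtype.ext hij)
  · obtain ⟨s, rfl⟩ := hi
    rw [glue_apply_mem, glue_apply_not_mem _ _ _ _ hj] at hij
    exact absurd (hij ▸ s.2) (g ⟨j, hj⟩).2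
  · obtain ⟨t, rfl⟩ := hj
    rw [glue_apply_not_mem _ _ _ _ hi, glue_apply_mem] at hij
    exact absurd (hij.symm ▸ t.2) (g ⟨i, hi⟩).2
  · rw [glue_apply_not_mem _ _ _ _ hi, glue_apply_not_mem _ _ _ _ hj] at hij
    exact congrArg Subtype.val (g.injective (Subtype.ext hij))

lemma glue_sup (h : T ↪ α) (g : ((Set.range (⇑h))ᶜ : Set α) ↪ ((Tᶜ : Set β))) :
    T ⊆ Set.range (glue T h (fun i => (g i).1)) :=
  fun t ht => ⟨h ⟨t, ht⟩, glue_apply_mem _ _ _ _⟩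

/-- Injective functions whose range contains `T` are counted by pairs of an embedding
of `T` into positions together with an embedding of the remaining positions into `Tᶜ`. -/
lemma card_sup :
    Nat.card {y : α → β // Function.Injective y ∧ T ⊆ Set.range y} =
    Nat.card (Σ h : T ↪ α, (((Set.range (⇑h))ᶜ : Set α) ↪ ((Tᶜ : Set β)))) := by
  refine (Nat.card_eq_of_bijective
    (fun p => ⟨glue T p.1 (fun i => (p.2 i).1), glue_injective T p.1 p.2, glue_sup T p.1 p.2⟩)
    ⟨?_, ?_⟩).symm
  · rintro ⟨h₁, g₁⟩ ⟨h₂, g₂⟩ hpp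
    have hw : glue T h₁ (fun i => (g₁ i).1) = glue T h₂ (fun i => (g₂ i).1) :=
      congrArg Subtype.val hpp
    have hh : h₁ = h₂ := by
      apply DFunLike.ext
      intro t
      apply glue_injective T h₂ g₂
      rw [glue_apply_mem, ← hw, glue_apply_mem]
    subst hh
    refine congrArg (Sigma.mk h₁) ?_
    apply DFunLike.ext
    intro i
    apply Subtype.ext
    calc (g₁ i).1 = glue T h₁ (fun j => (g₁ j).1) i.1 :=
          (glue_apply_not_mem T h₁ (fun j => (g₁ j).1) i.1 i.2).symm
      _ = glue T h₁ (fun j => (g₂ j).1) i.1 := by rw [hw]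
      _ = (g₂ i).1 := glue_apply_not_mem T h₁ (fun j => (g₂ j).1) i.1 i.2
  · intro y
    refine ⟨⟨supFwdH T y, supFwdG T y⟩, ?_⟩
    apply Subtype.ext
    show glue T (supFwdH T y) (fun i => ((supFwdG T y) i).1) = y.1
    funext i
    by_cases hi : i ∈ Set.range ⇑(supFwdH T y)
    · obtain ⟨t, rfl⟩ := hi
      rw [glue_apply_mem]
      exact (supFwdH_spec T y t).symm
    · rw [glue_apply_not_mem _ _ _ _ hi]
      rfl

end supEquiv

lemma natCard_sigma_const {ι : Type*} [Finite ι] {F : ι → Type*} [∀ i, Finite (F i)]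
    (c : ℕ) (hc : ∀ i, Nat.card (F i) = c) : Nat.card (Σ i, F i) = Nat.card ι * c := by
  classical
  cases nonempty_fintype ι
  letI : ∀ i, Fintype (F i) := fun i => Fintype.ofFinite _
  have hce : ∀ i, Fintype.card (F i) = c := fun i => by
    rw [← Nat.card_eq_fintype_card, hc]
  rw [Nat.card_eq_fintype_card, Fintype.card_sigma, Nat.card_eq_fintype_card]
  simp [hce, Finset.sum_const, Finset.card_univ, mul_comm]

lemma natCard_compl {β : Type*} [Finite β] (s : Set β) :
    Nat.card ↥(sᶜ) = Nat.card β - Nat.card s := by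
  classical
  cases nonempty_fintype β
  rw [Nat.card_eq_fintype_card, Nat.card_eq_fintype_card, Nat.card_eq_fintype_card,
    Fintype.card_compl_set]

lemma card_sup_count {α β : Type*} [Nonempty α] [Finite α] [Finite β] (T : Set β) :
    Nat.card {y : α → β // Function.Injective y ∧ T ⊆ Set.range y} =
      (Nat.card α).descFactorial (Nat.card T) *
        (Nat.card β - Nat.card T).descFactorial (Nat.card α - Nat.card T) := by
  rw [card_sup T, natCard_sigma_const ((Nat.card β - Nat.card T).descFactorial
    (Nat.card α - Nat.card T)) ?_, natCard_embedding]
  intro h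
  rw [natCard_embedding, natCard_compl, natCard_compl, Nat.card_range_of_injective h.injective]

lemma card_pat {α β γ : Type*} [Finite α] [Finite γ] (x₀ : α → β) (S : Set γ) :
    Nat.card {z : α → γ // (∀ i, z i ∈ S) ∧ ∀ i j, z i = z j ↔ x₀ i = x₀ j} =
      (Nat.card S).descFactorial (Nat.card (Set.range x₀)) := by
  rw [Nat.card_congr (patEquiv x₀ S), natCard_embedding]


/-- Let `q, ℓ` be positive integers with `ℓ ≤ q`.  Let `Y = (y_1,...,y_ℓ)` be a uniformly
random sequence of distinct elements of `ℤ/qℤ`, let `Z = (z_1,...,z_ℓ)` be independent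
uniform elements of `ℤ/qℤ` (independent of `Y`), and let `X = (x_1,...,x_ℓ)` be chosen
uniformly at random among sequences with entries in `{y_1,...,y_ℓ}` subject to
`x_i = x_j ↔ z_i = z_j`.  Then `X` is distributed as `ℓ` independent uniform elements of
`ℤ/qℤ`. -/
theorem stmt_17 {Ω : Type*} [MeasurableSpace Ω] (μ : Measure Ω) [IsProbabilityMeasure μ]
    (q ℓ : ℕ) (hq : 0 < q) (hℓ : 0 < ℓ) (hℓq : ℓ ≤ q)
    (Y Z X : Ω → (Fin ℓ → ZMod q))
    (hYinj : ∀ ω, Function.Injective (Y ω))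
    (hYunif : ∀ y₀ : Fin ℓ → ZMod q, Function.Injective y₀ →
      μ {ω | Y ω = y₀} =
        ((Nat.card {f : Fin ℓ → ZMod q // Function.Injective f} : ENNReal))⁻¹)
    (hZunif : ∀ z₀ : Fin ℓ → ZMod q, μ {ω | Z ω = z₀} = (((q : ENNReal)) ^ ℓ)⁻¹)
    (hYZind : ∀ y₀ z₀ : Fin ℓ → ZMod q,
      μ {ω | Y ω = y₀ ∧ Z ω = z₀} = μ {ω | Y ω = y₀} * μ {ω | Z ω = z₀})
    (hXadm : ∀ ω, (∀ i, X ω i ∈ Set.range (Y ω)) ∧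
      (∀ i j, X ω i = X ω j ↔ Z ω i = Z ω j))
    (hXcond : ∀ y₀ z₀ x₀ : Fin ℓ → ZMod q, Function.Injective y₀ →
      ((∀ i, x₀ i ∈ Set.range y₀) ∧ (∀ i j, x₀ i = x₀ j ↔ z₀ i = z₀ j)) →
      μ {ω | X ω = x₀ ∧ Y ω = y₀ ∧ Z ω = z₀} *
          (Nat.card {x : Fin ℓ → ZMod q //
            (∀ i, x i ∈ Set.range y₀) ∧ (∀ i j, x i = x j ↔ z₀ i = z₀ j)} : ENNReal)
        = μ {ω | Y ω = y₀ ∧ Z ω = z₀}) :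
    ∀ x₀ : Fin ℓ → ZMod q, μ {ω | X ω = x₀} = (((q : ENNReal)) ^ ℓ)⁻¹ := by
  classical
  haveI : NeZero q := ⟨hq.ne'⟩
  haveI : Nonempty (Fin ℓ) := ⟨⟨0, hℓ⟩⟩
  -- the number of injective tuples
  have hCA : Nat.card {f : Fin ℓ → ZMod q // Function.Injective f} = q.descFactorial ℓ := by
    rw [Nat.card_congr (Equiv.subtypeInjectiveEquivEmbedding (Fin ℓ) (ZMod q)),
      natCard_embedding, Nat.card_zmod]
    congr 1
    simp [Nat.card_eq_fintype_card]
  have hqpow0 : ((q : ENNReal)) ^ ℓ ≠ 0 := by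
    simp [hq.ne']
  have hqpowtop : ((q : ENNReal)) ^ ℓ ≠ ⊤ := by
    simp
  -- key upper bound
  have key : ∀ x₀ : Fin ℓ → ZMod q, μ {ω | X ω = x₀} ≤ (((q : ENNReal)) ^ ℓ)⁻¹ := by
    intro x₀
    set k := Nat.card (Set.range x₀) with hk
    have hkℓ : k ≤ ℓ := by
      rw [hk]
      have h := Finite.card_range_le x₀
      rwa [Nat.card_eq_fintype_card (α := Fin ℓ), Fintype.card_fin] at h
    have hdFℓk0 : ((ℓ.descFactorial k : ℕ) : ENNReal) ≠ 0 := by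
      simpa [Nat.descFactorial_eq_zero_iff_lt] using Nat.not_lt.mpr hkℓ
    have hdFq0 : ((q.descFactorial ℓ : ℕ) : ENNReal) ≠ 0 := by
      simpa [Nat.descFactorial_eq_zero_iff_lt] using Nat.not_lt.mpr hℓq
    -- value of each elementary event
    have hterm : ∀ y₀ z₀ : Fin ℓ → ZMod q,
        μ {ω | X ω = x₀ ∧ Y ω = y₀ ∧ Z ω = z₀} =
          if Function.Injective y₀ ∧ (∀ i, x₀ i ∈ Set.range y₀) ∧
              (∀ i j, x₀ i = x₀ j ↔ z₀ i = z₀ j)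
          then ((q.descFactorial ℓ : ENNReal))⁻¹ * (((q : ENNReal)) ^ ℓ)⁻¹ *
            ((ℓ.descFactorial k : ENNReal))⁻¹
          else 0 := by
      intro y₀ z₀
      split_ifs with hcond
      · obtain ⟨hinj, hadm⟩ := hcond
        have h1 := hXcond y₀ z₀ x₀ hinj hadm
        -- the count of admissible x equals ℓ.descFactorial k
        have hN : Nat.card {x : Fin ℓ → ZMod q //
            (∀ i, x i ∈ Set.range y₀) ∧ (∀ i j, x i = x j ↔ z₀ i = z₀ j)} =
            ℓ.descFactorial k := by
          have he : {x : Fin ℓ → ZMod q //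
              (∀ i, x i ∈ Set.range y₀) ∧ (∀ i j, x i = x j ↔ z₀ i = z₀ j)} ≃
              {x : Fin ℓ → ZMod q //
              (∀ i, x i ∈ Set.range y₀) ∧ (∀ i j, x i = x j ↔ x₀ i = x₀ j)} := by
            apply Equiv.subtypeEquivRight
            intro x
            constructor
            · rintro ⟨h1', h2'⟩
              exact ⟨h1', fun i j => (h2' i j).trans (hadm.2 i j).symm⟩
            · rintro ⟨h1', h2'⟩
              exact ⟨h1', fun i j => (h2' i j).trans (hadm.2 i j)⟩
          rw [Nat.card_congr he, card_pat, Nat.card_range_of_injective hinj, ← hk]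
          simp [Nat.card_eq_fintype_card]
        have hYZ : μ {ω | Y ω = y₀ ∧ Z ω = z₀} =
            ((q.descFactorial ℓ : ENNReal))⁻¹ * (((q : ENNReal)) ^ ℓ)⁻¹ := by
          rw [hYZind, hYunif y₀ hinj, hZunif, hCA]
        rw [hN, hYZ] at h1
        calc μ {ω | X ω = x₀ ∧ Y ω = y₀ ∧ Z ω = z₀}
            = μ {ω | X ω = x₀ ∧ Y ω = y₀ ∧ Z ω = z₀} * (ℓ.descFactorial k : ENNReal) *
              ((ℓ.descFactorial k : ENNReal))⁻¹ := by
              rw [mul_assoc, ENNReal.mul_inv_cancel hdFℓk0 (ENNReal.natCast_ne_top _), mul_one]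
          _ = ((q.descFactorial ℓ : ENNReal))⁻¹ * (((q : ENNReal)) ^ ℓ)⁻¹ *
              ((ℓ.descFactorial k : ENNReal))⁻¹ := by rw [h1]
      · -- the event is empty
        have : {ω | X ω = x₀ ∧ Y ω = y₀ ∧ Z ω = z₀} = (∅ : Set Ω) := by
          ext ω
          simp only [Set.mem_setOf_eq, Set.mem_empty_iff_false, iff_false, not_and]
          intro hX hY hZ
          apply hcond
          obtain ⟨ha1, ha2⟩ := hXadm ω
          subst hX; subst hY; subst hZ
          exact ⟨hYinj ω, ha1, fun i j => ha2 i j⟩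
        rw [this, measure_empty]
    -- summing up
    have hcover : {ω | X ω = x₀} ⊆
        ⋃ p : (Fin ℓ → ZMod q) × (Fin ℓ → ZMod q),
          {ω | X ω = x₀ ∧ Y ω = p.1 ∧ Z ω = p.2} :=
      fun ω hω => Set.mem_iUnion.mpr ⟨(Y ω, Z ω), ⟨hω, rfl, rfl⟩⟩
    have hbound : μ {ω | X ω = x₀} ≤
        ∑ p : (Fin ℓ → ZMod q) × (Fin ℓ → ZMod q),
          μ {ω | X ω = x₀ ∧ Y ω = p.1 ∧ Z ω = p.2} := by
      refine (measure_mono hcover).trans ?_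
      refine (measure_iUnion_le _).trans ?_
      rw [tsum_fintype]
    -- compute the sum exactly
    have hcount : Nat.card {p : (Fin ℓ → ZMod q) × (Fin ℓ → ZMod q) //
        Function.Injective p.1 ∧ (∀ i, x₀ i ∈ Set.range p.1) ∧
          (∀ i j, x₀ i = x₀ j ↔ p.2 i = p.2 j)} =
        ℓ.descFactorial k * q.descFactorial ℓ := by
      have he1 : {p : (Fin ℓ → ZMod q) × (Fin ℓ → ZMod q) //
          Function.Injective p.1 ∧ (∀ i, x₀ i ∈ Set.range p.1) ∧
            (∀ i j, x₀ i = x₀ j ↔ p.2 i = p.2 j)} ≃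
          {y : Fin ℓ → ZMod q // Function.Injective y ∧ Set.range x₀ ⊆ Set.range y} ×
          {z : Fin ℓ → ZMod q // (∀ i, z i ∈ (Set.univ : Set (ZMod q))) ∧
            (∀ i j, z i = z j ↔ x₀ i = x₀ j)} := by
        refine (Equiv.subtypeEquivRight ?_).trans (Equiv.subtypeProdEquivProd)
        intro p
        constructor
        · rintro ⟨h1', h2', h3'⟩
          exact ⟨⟨h1', Set.range_subset_iff.mpr h2'⟩,
            fun i => Set.mem_univ _, fun i j => (h3' i j).symm⟩
        · rintro ⟨⟨h1', h2'⟩, _, h3'⟩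
          exact ⟨h1', Set.range_subset_iff.mp h2', fun i j => (h3' i j).symm⟩
      rw [Nat.card_congr he1, Nat.card_prod, card_sup_count, card_pat]
      have hcZ : Nat.card ↥(Set.univ : Set (ZMod q)) = q := by
        rw [Nat.card_congr (Equiv.Set.univ _), Nat.card_zmod]
      have hcF : Nat.card (Fin ℓ) = ℓ := by simp [Nat.card_eq_fintype_card]
      rw [hcZ, hcF, Nat.card_zmod, ← hk]
      rw [mul_assoc, Nat.descFactorial_mul_descFactorial hkℓ]
    have hsum : ∑ p : (Fin ℓ → ZMod q) × (Fin ℓ → ZMod q),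
        μ {ω | X ω = x₀ ∧ Y ω = p.1 ∧ Z ω = p.2} = (((q : ENNReal)) ^ ℓ)⁻¹ := by
      have : ∀ p : (Fin ℓ → ZMod q) × (Fin ℓ → ZMod q),
          μ {ω | X ω = x₀ ∧ Y ω = p.1 ∧ Z ω = p.2} =
          if Function.Injective p.1 ∧ (∀ i, x₀ i ∈ Set.range p.1) ∧
              (∀ i j, x₀ i = x₀ j ↔ p.2 i = p.2 j)
          then ((q.descFactorial ℓ : ENNReal))⁻¹ * (((q : ENNReal)) ^ ℓ)⁻¹ *
            ((ℓ.descFactorial k : ENNReal))⁻¹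
          else 0 := fun p => hterm p.1 p.2
      rw [Finset.sum_congr rfl (fun p _ => this p)]
      rw [Finset.sum_ite, Finset.sum_const, Finset.sum_const_zero, add_zero, nsmul_eq_mul]
      have hfc : (Finset.univ.filter (fun p : (Fin ℓ → ZMod q) × (Fin ℓ → ZMod q) =>
          Function.Injective p.1 ∧ (∀ i, x₀ i ∈ Set.range p.1) ∧
            (∀ i j, x₀ i = x₀ j ↔ p.2 i = p.2 j))).card =
          ℓ.descFactorial k * q.descFactorial ℓ := by
        rw [← Fintype.card_subtype, ← Nat.card_eq_fintype_card, hcount]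
      rw [hfc]
      push_cast
      calc ((ℓ.descFactorial k : ENNReal) * (q.descFactorial ℓ : ENNReal)) *
            (((q.descFactorial ℓ : ENNReal))⁻¹ * (((q : ENNReal)) ^ ℓ)⁻¹ *
              ((ℓ.descFactorial k : ENNReal))⁻¹)
          = ((ℓ.descFactorial k : ENNReal) * ((ℓ.descFactorial k : ENNReal))⁻¹) *
            ((q.descFactorial ℓ : ENNReal) * ((q.descFactorial ℓ : ENNReal))⁻¹) *
            (((q : ENNReal)) ^ ℓ)⁻¹ := by ring
        _ = (((q : ENNReal)) ^ ℓ)⁻¹ := by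
            rw [ENNReal.mul_inv_cancel hdFℓk0 (ENNReal.natCast_ne_top _),
              ENNReal.mul_inv_cancel hdFq0 (ENNReal.natCast_ne_top _), one_mul, one_mul]
    exact hbound.trans hsum.le
  -- conclude equality from the bound and total mass
  have hsum_ge : (1 : ENNReal) ≤ ∑ x₀ : Fin ℓ → ZMod q, μ {ω | X ω = x₀} := by
    have hsub : (Set.univ : Set Ω) ⊆ ⋃ x₀ : Fin ℓ → ZMod q, {ω | X ω = x₀} :=
      fun ω _ => Set.mem_iUnion.mpr ⟨X ω, rfl⟩
    calc (1 : ENNReal) = μ Set.univ := measure_univ.symm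
      _ ≤ μ (⋃ x₀ : Fin ℓ → ZMod q, {ω | X ω = x₀}) := measure_mono hsub
      _ ≤ ∑' x₀ : Fin ℓ → ZMod q, μ {ω | X ω = x₀} := measure_iUnion_le _
      _ = ∑ x₀ : Fin ℓ → ZMod q, μ {ω | X ω = x₀} := tsum_fintype _
  have hc1 : ∑ _x₀ : Fin ℓ → ZMod q, (((q : ENNReal)) ^ ℓ)⁻¹ = 1 := by
    rw [Finset.sum_const, Finset.card_univ, nsmul_eq_mul]
    have hcard : (Fintype.card (Fin ℓ → ZMod q) : ENNReal) = ((q : ENNReal)) ^ ℓ := by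
      simp [ZMod.card]
    rw [hcard, ENNReal.mul_inv_cancel hqpow0 hqpowtop]
  intro x₀
  by_contra hne
  have hlt : μ {ω | X ω = x₀} < (((q : ENNReal)) ^ ℓ)⁻¹ := (key x₀).lt_of_ne hne
  have h2 : ∑ x : Fin ℓ → ZMod q, μ {ω | X ω = x} <
      ∑ _x : Fin ℓ → ZMod q, (((q : ENNReal)) ^ ℓ)⁻¹ := by
    rw [← Finset.add_sum_erase _ _ (Finset.mem_univ x₀),
      ← Finset.add_sum_erase _ (fun _ => (((q : ENNReal)) ^ ℓ)⁻¹) (Finset.mem_univ x₀)]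
    refine ENNReal.add_lt_add_of_lt_of_le ?_ hlt (Finset.sum_le_sum fun i _ => key i)
    refine (ENNReal.sum_lt_top.mpr fun i _ => ?_).ne
    exact lt_of_le_of_lt (key i) (ENNReal.inv_lt_top.mpr (by positivity))
  rw [hc1] at h2
  exact absurd (lt_of_le_of_lt hsum_ge h2) (lt_irrefl _)
end

section
/- Let A ⊆ ℤ_{>0} be a random set where each positive integer is included independently with probability p ∈ (0,1), and let u ≥ 2 be an even integer. Then E[F(⟨A ∩ [u,∞)⟩)] ≤ C(p^{−4} + u²) for an absolute constant C, where F denotes the Frobenius number. -/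
/-!
If `a` and `a + 1` both lie in `T`, every `n ≥ a (a - 1)` is a sum of copies of `a` and `a + 1`,
so the Frobenius number of `⟨T⟩` is less than `a²`. Among the disjoint pairs
`(u + 2k, u + 2k + 1)`, each lies in `A` independently with probability `p²`, so the index `K` of
the first such pair is geometric and `F(⟨A ∩ [u, ∞)⟩) < (u + 2K)² ≤ 2u² + 8K²`. Finally
`E[K²] = ∑ⱼ (2j + 1) P(K > j) = ∑ⱼ (2j + 1) (1 - p²)^(j+1) ≤ 2 p⁻⁴`.
-/

open MeasureTheory ProbabilityTheory
open scoped ENNReal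

noncomputable def frobeniusNumber (T : Set ℕ) : ℤ :=
  sSup (insert (-1) ((fun n : ℕ => (n : ℤ)) '' (AddSubmonoid.closure T : Set ℕ)ᶜ))

theorem mem_closure_of_mul_pred_le {T : Set ℕ} {a n : ℕ} (ha : 0 < a) (h₀ : a ∈ T)
    (h₁ : a + 1 ∈ T) (hn : a * (a - 1) ≤ n) : n ∈ AddSubmonoid.closure T := by
  have hr : n % a < a := Nat.mod_lt n ha
  have hq : a - 1 ≤ n / a := (Nat.le_div_iff_mul_le ha).2 (by rw [mul_comm]; exact hn)
  have hn' : n = (n / a - n % a) • a + (n % a) • (a + 1) := by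
    have := Nat.div_add_mod n a
    simp only [smul_eq_mul]
    zify [show n % a ≤ n / a by omega] at this ⊢
    linear_combination -this
  rw [hn']
  exact add_mem (AddSubmonoid.nsmul_mem _ (AddSubmonoid.subset_closure h₀) _)
    (AddSubmonoid.nsmul_mem _ (AddSubmonoid.subset_closure h₁) _)

theorem frobeniusNumber_le_of_mem {T : Set ℕ} {a : ℕ} (ha : 0 < a) (h₀ : a ∈ T)
    (h₁ : a + 1 ∈ T) : frobeniusNumber T ≤ a * (a - 1) - 1 := by
  refine csSup_le ⟨-1, Set.mem_insert _ _⟩ ?_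
  rintro x (rfl | ⟨n, hn, rfl⟩)
  · nlinarith
  · have : n < a * (a - 1) := by
      by_contra! h
      exact hn (mem_closure_of_mul_pred_le ha h₀ h₁ h)
    have : (n : ℤ) < a * (a - 1 : ℕ) := by exact_mod_cast this
    push_cast [Nat.one_le_iff_ne_zero.2 ha.ne'] at this
    change (n : ℤ) ≤ _
    omega

theorem exists_frobeniusNumber_inter_Ici_le (T : Set ℕ) {u : ℕ} (hu : 0 < u) :
    ∃ k : ℕ, (∀ i < k, ¬(u + 2 * i ∈ T ∧ u + 2 * i + 1 ∈ T)) ∧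
      frobeniusNumber (T ∩ Set.Ici u) ≤ 2 * u ^ 2 + 8 * k ^ 2 := by
  classical
  by_cases h : ∃ k, u + 2 * k ∈ T ∧ u + 2 * k + 1 ∈ T
  · obtain ⟨h₀, h₁⟩ := Nat.find_spec h
    refine ⟨Nat.find h, fun i hi => Nat.find_min h hi, ?_⟩
    have := frobeniusNumber_le_of_mem (T := T ∩ Set.Ici u) (by omega)
      ⟨h₀, Set.mem_Ici.2 (by omega)⟩ ⟨h₁, Set.mem_Ici.2 (by omega)⟩
    push_cast at this
    nlinarith [sq_nonneg ((u : ℤ) - 2 * Nat.find h)]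
  -- with no pair in `T` the first condition is vacuous, so any `k ≥ F` will do
  · refine ⟨(frobeniusNumber (T ∩ Set.Ici u)).toNat, fun i _ => not_exists.1 h i, ?_⟩
    have := Int.self_le_toNat (frobeniusNumber (T ∩ Set.Ici u))
    nlinarith

open Finset in
theorem ENNReal.tsum_add_one_mul_geometric (r : ℝ≥0∞) :
    ∑' n : ℕ, (n + 1) * r ^ n = (1 - r)⁻¹ ^ 2 := by
  rw [sq, ← ENNReal.tsum_geometric, ← ENNReal.tsum_mul_right]
  simp_rw [← ENNReal.tsum_mul_left, ← pow_add]
  rw [← ENNReal.tsum_prod, ← HasAntidiagonal.sigmaAntidiagonalEquivProd.tsum_eq,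
    ENNReal.tsum_sigma']
  refine tsum_congr fun n => ?_
  have : ∀ x : antidiagonal n, r ^ (x.1.1 + x.1.2) = r ^ n := fun x => by
    rw [mem_antidiagonal.1 x.2]
  simp [HasAntidiagonal.sigmaAntidiagonalEquivProd, this]

theorem ENNReal.tsum_two_mul_add_one_mul_geometric_le {q : ℝ≥0∞} (hq : q ≤ 1) :
    ∑' j : ℕ, (2 * j + 1) * q ^ (j + 1) ≤ 2 * (1 - q)⁻¹ ^ 2 := by
  rw [← ENNReal.tsum_add_one_mul_geometric, ← ENNReal.tsum_mul_left]
  refine ENNReal.tsum_le_tsum fun j => ?_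
  calc (2 * j + 1) * q ^ (j + 1) ≤ (2 * j + 2) * q ^ j := by
        rw [pow_succ]
        gcongr
        · norm_num
        · exact mul_le_of_le_one_right' hq
    _ = 2 * ((j + 1) * q ^ j) := by ring

namespace ProbabilityTheory

variable {Ω ι κ : Type*} [MeasurableSpace Ω] {μ : Measure Ω} {s : ι → Set Ω}

theorem iIndepSet.measure_biInter_compl (h : iIndepSet s μ) (F : Finset ι) :
    μ (⋂ i ∈ F, (s i)ᶜ) = ∏ i ∈ F, μ (s i)ᶜ :=
  ((iIndepSet_iff_iIndep s μ).1 h).meas_biInter fun _ _ =>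
    (MeasurableSpace.measurableSet_generateFrom (Set.mem_singleton _)).compl

theorem iIndepSet.measure_inter_comp (h : iIndepSet s μ) {f g : κ → ι}
    (hfg : Function.Injective (Sum.elim f g)) (k : κ) :
    μ (s (f k) ∩ s (g k)) = μ (s (f k)) * μ (s (g k)) := by
  classical
  have hne : Sum.inl k ∉ ({Sum.inr k} : Finset (κ ⊕ κ)) := by simp
  simpa [Finset.prod_insert hne] using (h.precomp hfg).meas_biInter {Sum.inl k, Sum.inr k}

theorem iIndepSet.inter_comp (hs : ∀ i, MeasurableSet (s i)) (h : iIndepSet s μ) {f g : κ → ι}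
    (hfg : Function.Injective (Sum.elim f g)) :
    iIndepSet (fun k => s (f k) ∩ s (g k)) μ := by
  rw [iIndepSet_iff_meas_biInter fun k => (hs _).inter (hs _)]
  intro F
  have key := (h.precomp hfg).meas_biInter (F.disjSum F)
  have hset : ⋂ x ∈ F.disjSum F, (s ∘ Sum.elim f g) x = ⋂ k ∈ F, s (f k) ∩ s (g k) := by
    ext ω
    simp [Finset.mem_disjSum, forall_and]
  rw [hset, Finset.prod_disjSum] at key
  simp only [key, h.measure_inter_comp hfg, Finset.prod_mul_distrib, Function.comp_apply,
    Sum.elim_inl, Sum.elim_inr]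

end ProbabilityTheory

section WaitingTime

variable {Ω : Type*} {S : ℕ → Set Ω}

/-- `K ω ^ 2 = ∑_{j < K ω} (2 j + 1)`, where `K ω` is the index of the first `S i` containing `ω`
(`K ω = ∞` if there is none). -/
noncomputable def waitingTimeSq (S : ℕ → Set Ω) (ω : Ω) : ℝ≥0∞ :=
  ∑' j : ℕ, (⋂ i ∈ Finset.range (j + 1), (S i)ᶜ).indicator (fun _ => 2 * j + 1) ω

theorem sq_le_waitingTimeSq {ω : Ω} {k : ℕ} (hk : ∀ i < k, ω ∉ S i) :
    (k : ℝ≥0∞) ^ 2 ≤ waitingTimeSq S ω := by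
  have hodd : ∀ n : ℕ, ∑ j ∈ Finset.range n, (2 * j + 1 : ℝ≥0∞) = n ^ 2 := by
    intro n
    induction n with
    | zero => simp
    | succ n ih => rw [Finset.sum_range_succ, ih]; push_cast; ring
  rw [← hodd]
  refine le_of_eq_of_le (Finset.sum_congr rfl fun j hj => ?_) (ENNReal.sum_le_tsum _)
  rw [Set.indicator_of_mem]
  simp only [Set.mem_iInter, Finset.mem_range, Set.mem_compl_iff]
  exact fun i hi => hk i (by simp at hj; omega)

variable [MeasurableSpace Ω] {μ : Measure Ω}

theorem lintegral_waitingTimeSq (hS : ∀ i, MeasurableSet (S i)) (h : iIndepSet S μ) {q : ℝ≥0∞}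
    (hq : ∀ i, μ (S i)ᶜ = q) :
    ∫⁻ ω, waitingTimeSq S ω ∂μ = ∑' j : ℕ, (2 * j + 1) * q ^ (j + 1) := by
  have hmeas : ∀ j, MeasurableSet (⋂ i ∈ Finset.range (j + 1), (S i)ᶜ) := fun j =>
    Finset.measurableSet_biInter _ fun i _ => (hS i).compl
  unfold waitingTimeSq
  rw [lintegral_tsum fun j => (measurable_const.indicator (hmeas j)).aemeasurable]
  refine tsum_congr fun j => ?_
  rw [lintegral_indicator_const (hmeas j), h.measure_biInter_compl]
  simp [hq]

end WaitingTime

theorem integral_le_toReal_lintegral_ofReal {α : Type*} [MeasurableSpace α] {μ : Measure α}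
    (f : α → ℝ) : ∫ a, f a ∂μ ≤ (∫⁻ a, ENNReal.ofReal (f a) ∂μ).toReal := by
  by_cases hf : Integrable f μ
  · rw [integral_eq_lintegral_pos_part_sub_lintegral_neg_part hf]
    exact sub_le_self _ ENNReal.toReal_nonneg
  · rw [integral_undef hf]
    exact ENNReal.toReal_nonneg

theorem lintegral_ofReal_frobeniusNumber_inter_Ici_le {Ω : Type*} [MeasurableSpace Ω]
    {μ : Measure Ω} {A : Ω → Set ℕ} {r : ℝ≥0∞} (hAm : ∀ n, MeasurableSet {ω | n ∈ A ω})
    (hA : iIndepSet (fun n => {ω | n ∈ A ω}) μ) (hAr : ∀ n, 0 < n → μ {ω | n ∈ A ω} = r)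
    {u : ℕ} (hu : 0 < u) :
    ∫⁻ ω, ENNReal.ofReal (frobeniusNumber (A ω ∩ Set.Ici u)) ∂μ
      ≤ 2 * u ^ 2 + 16 * (r ^ 2)⁻¹ ^ 2 := by
  have := hA.isProbabilityMeasure
  set S : ℕ → Set Ω := fun k => {ω | u + 2 * k ∈ A ω} ∩ {ω | u + 2 * k + 1 ∈ A ω}
  have hinj : Function.Injective (Sum.elim (fun k => u + 2 * k) (fun k => u + 2 * k + 1)) :=
    Function.Injective.sumElim (fun _ _ _ => by omega) (fun _ _ _ => by omega)
      fun _ _ => by omega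
  have hS : ∀ k, μ (S k)ᶜ = 1 - r ^ 2 := fun k => by
    rw [prob_compl_eq_one_sub ((hAm _).inter (hAm _)), hA.measure_inter_comp hinj,
      hAr _ (by omega), hAr _ (by omega), sq]
  have hr : r ^ 2 ≤ 1 := pow_le_one₀ zero_le (hAr 1 one_pos ▸ prob_le_one)
  have hpoint : ∀ ω, ENNReal.ofReal (frobeniusNumber (A ω ∩ Set.Ici u))
      ≤ 2 * u ^ 2 + 8 * waitingTimeSq S ω := fun ω => by
    obtain ⟨k, hk, hF⟩ := exists_frobeniusNumber_inter_Ici_le (A ω) hu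
    calc ENNReal.ofReal (frobeniusNumber (A ω ∩ Set.Ici u))
        ≤ ENNReal.ofReal ((2 * u ^ 2 + 8 * k ^ 2 : ℕ) : ℝ) :=
          ENNReal.ofReal_le_ofReal (by exact_mod_cast hF)
      _ = 2 * u ^ 2 + 8 * (k : ℝ≥0∞) ^ 2 := by rw [ENNReal.ofReal_natCast]; push_cast; rfl
      _ ≤ 2 * u ^ 2 + 8 * waitingTimeSq S ω := by gcongr; exact sq_le_waitingTimeSq hk
  calc _ ≤ ∫⁻ ω, 2 * u ^ 2 + 8 * waitingTimeSq S ω ∂μ := lintegral_mono hpoint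
    _ = 2 * u ^ 2 + 8 * ∑' j : ℕ, (2 * j + 1) * (1 - r ^ 2) ^ (j + 1) := by
        rw [lintegral_add_left measurable_const, lintegral_const, measure_univ, mul_one,
          lintegral_const_mul' 8 _ (by simp), lintegral_waitingTimeSq (S := S)
            (fun k => (hAm _).inter (hAm _)) (hA.inter_comp hAm hinj) hS]
    _ ≤ 2 * u ^ 2 + 8 * (2 * (1 - (1 - r ^ 2))⁻¹ ^ 2) := by
        gcongr; exact ENNReal.tsum_two_mul_add_one_mul_geometric_le tsub_le_self
    _ = 2 * u ^ 2 + 16 * (r ^ 2)⁻¹ ^ 2 := by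
        rw [ENNReal.sub_sub_cancel ENNReal.one_ne_top hr, ← mul_assoc]; norm_num

/-- Let `A ⊆ ℤ_{>0}` be a random set where each positive integer is included
independently with probability `p ∈ (0,1)`, and let `u ≥ 2` be even.  Then
`E[F(⟨A ∩ [u,∞)⟩)] ≤ C (p⁻⁴ + u²)` for an absolute constant `C`, where `F` is the
Frobenius number, realized as `sSup (insert (-1) (ℤ_{>0} \ ⟨·⟩))`. -/
theorem stmt_19 :
    ∃ C : ℝ, 0 < C ∧
      ∀ (Ω : Type) (_ : MeasurableSpace Ω) (μ : Measure Ω), IsProbabilityMeasure μ →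
      ∀ (p : ℝ), 0 < p → p < 1 →
      ∀ (A : Ω → Set ℕ),
        (∀ n : ℕ, MeasurableSet {ω | n ∈ A ω}) →
        iIndepSet (fun n : ℕ => {ω | n ∈ A ω}) μ →
        (∀ n : ℕ, μ {ω | n ∈ A ω} = if 0 < n then ENNReal.ofReal p else 0) →
      ∀ (u : ℕ), 2 ≤ u → Even u →
        (∫ ω, ((sSup (insert (-1) ((fun n : ℕ => (n : ℤ)) ''
            ((AddSubmonoid.closure (A ω ∩ Set.Ici u) : Set ℕ))ᶜ)) : ℤ) : ℝ) ∂μ)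
          ≤ C * (p ^ (-4 : ℤ) + (u : ℝ) ^ 2) := by
  refine ⟨16, by norm_num, fun Ω _ μ _ p hp _ A hAm hA hAp u hu _ => ?_⟩
  have hlint := lintegral_ofReal_frobeniusNumber_inter_Ici_le hAm hA
    (fun n hn => (hAp n).trans (if_pos hn)) (u := u) (by omega)
  have hp4 : (ENNReal.ofReal p ^ 2)⁻¹ ^ 2 = ENNReal.ofReal (p ^ (-4 : ℤ)) := by
    rw [← ENNReal.ofReal_pow hp.le, ← ENNReal.ofReal_inv_of_pos (by positivity),
      ← ENNReal.ofReal_pow (by positivity), show (-4 : ℤ) = -((2 * 2 : ℕ) : ℤ) by norm_num,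
      zpow_neg, zpow_natCast, pow_mul, inv_pow]
  have hbound : 2 * (u : ℝ≥0∞) ^ 2 + 16 * ENNReal.ofReal (p ^ (-4 : ℤ))
      = ENNReal.ofReal (2 * u ^ 2 + 16 * p ^ (-4 : ℤ)) := by
    rw [ENNReal.ofReal_add (by positivity) (by positivity), ENNReal.ofReal_mul (by norm_num),
      ENNReal.ofReal_mul (by norm_num), ENNReal.ofReal_pow (Nat.cast_nonneg u),
      ENNReal.ofReal_natCast]
    norm_num
  rw [hp4, hbound] at hlint
  calc _ ≤ (∫⁻ ω, ENNReal.ofReal (frobeniusNumber (A ω ∩ Set.Ici u)) ∂μ).toReal :=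
        integral_le_toReal_lintegral_ofReal _
    _ ≤ 2 * u ^ 2 + 16 * p ^ (-4 : ℤ) := ENNReal.toReal_le_of_le_ofReal (by positivity) hlint
    _ ≤ 16 * (p ^ (-4 : ℤ) + u ^ 2) := by nlinarith [sq_nonneg (u : ℝ)]
end
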